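/- arXiv:2602.05346 — 3 statements merged into one kernel-verified Lean document; each statement's English description precedes it below -/
import Mathlib

section
/- Let N = 2u + f_safe + 1. A commit quorum of size ⌊N/2⌋ + 1 and a view-change quorum of size N - u intersect in at least ⌊(f_safe + 1)/2⌋ + 1 nodes. -/
/-! Inclusion–exclusion inside the `N` nodes gives `|Qc ∩ Qv| ≥ |Qc| + |Qv| - N`, and with
`N = 2u + f_safe + 1` we have `⌊N/2⌋ = u + ⌊(f_safe + 1)/2⌋`, so this lower bound is
`⌊(f_safe + 1)/2⌋ + 1`. -/

theorem Finset.card_add_card_le_card_inter_add_card_univ {α : Type*} [Fintype α] [DecidableEq α]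
    (s t : Finset α) : s.card + t.card ≤ (s ∩ t).card + Fintype.card α := by
  rw [← card_inter_add_card_union]
  exact Nat.add_le_add_left (card_le_univ _) _

/-- With `N = 2u + f_safe + 1`, a commit quorum of size `⌊N/2⌋ + 1` and a view-change
quorum of size `N - u` intersect in at least `⌊(f_safe + 1)/2⌋ + 1` nodes. -/
theorem commit_viewchange_intersection
    (N u f_safe : ℕ) (hN : N = 2 * u + f_safe + 1)
    (Qc Qv : Finset (Fin N))
    (hQc : Qc.card = N / 2 + 1) (hQv : Qv.card = N - u) :
    (Qc ∩ Qv).card ≥ (f_safe + 1) / 2 + 1 := by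
  have hcount := Qc.card_add_card_le_card_inter_add_card_univ Qv
  rw [Fintype.card_fin, hQc, hQv] at hcount
  have hhalf : N / 2 = u + (f_safe + 1) / 2 := by omega
  omega
end

section
/- Under the fast-path condition N - u > 2·f_safe, if two conflicting batches each received votes from at least N - u - f_safe distinct nodes, and a fast quorum of all N nodes voted for one of them, then some correct node voted for both batches (a contradiction with correct-node behavior); hence at most one of two conflicting batches each appearing ≥ N - u - f_safe times can have been fast-path audited. -/
theorem fast_path_no_conflicting_audit_general
    {β : Type} (N u f_safe : ℕ)
    (hfast : N - u > 2 * f_safe)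
    (B : Finset (Fin N)) (hB : B.card ≤ f_safe)
    (conflicting : β → β → Prop) (voted : Fin N → β → Prop)
    (hcorrect : ∀ n, n ∉ B → ∀ b1 b2, conflicting b1 b2 → voted n b1 → ¬ voted n b2)
    (bA bC : β) (hconf : conflicting bA bC)
    (hA : ∀ n : Fin N, voted n bA)
    (S : Finset (Fin N)) (hS : S.card ≥ N - u - f_safe)
    (hSvote : ∀ n ∈ S, voted n bC) :
    False := by
  obtain ⟨n, hnS, hnB⟩ := Finset.exists_mem_notMem_of_card_lt_card (s := B) (t := S) (by omega)
  exact hcorrect n hnB bA bC hconf (hA n) (hSvote n hnS)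

/-- Under the fast-path condition `N - u > 2·f_safe`, if all `N` nodes voted for a
batch `A` and a set `S` of at least `N - u - f_safe` nodes voted for a conflicting
batch, then some correct node voted for both; since correct nodes never vote for two
conflicting batches in the same view, at most one of the two batches can have been
fast-path audited. -/
theorem fast_path_no_conflicting_audit
    {β : Type} (N u f_safe : ℕ) (hN : N ≥ 2 * u + f_safe + 1)
    (hfast : N - u > 2 * f_safe)
    (B : Finset (Fin N)) (hB : B.card ≤ f_safe)
    (conflicting : β → β → Prop) (voted : Fin N → β → Prop)
    (hcorrect : ∀ n, n ∉ B → ∀ b1 b2, conflicting b1 b2 → voted n b1 → ¬ voted n b2)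
    (bA bC : β) (hconf : conflicting bA bC)
    (hA : ∀ n : Fin N, voted n bA)
    (S : Finset (Fin N)) (hS : S.card ≥ N - u - f_safe)
    (hSvote : ∀ n ∈ S, voted n bC) :
    False :=
  fast_path_no_conflicting_audit_general N u f_safe hfast B hB conflicting voted hcorrect bA bC
    hconf hA S hS hSvote
end

section
/- Forgoing liveness (π_live = 0), the minimum number of platforms required to tolerate π_safe compromised platforms while tolerating c crashes is π_safe + 1, achieved by placing 2c + 1 nodes in each of π_safe + 1 platforms; moreover, for any valid configuration, Π ≥ (2c+1)/ν + π_safe where ν is the size of the π_safe-th largest platform. -/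
/-!
Deleting the `πs` largest platforms leaves at least `2c + 1` nodes on the remaining `P - πs`
platforms, each of which is no larger than the `πs`-th largest one, of size `ν`; hence
`ν (P - πs) ≥ 2c + 1`, which forces `P > πs`. With `πs + 1` platforms of `2c + 1` nodes the
safety bound holds with equality.
-/

open Finset

theorem Fin.card_filter_not_val_lt (n m : ℕ) : #{i : Fin n | ¬ i.val < m} = n - m := by
  have hsplit := card_filter_add_card_filter_not (s := univ) (fun i : Fin n => i.val < m)
  rw [Fin.card_filter_val_lt, card_univ, Fintype.card_fin] at hsplit
  omega

theorem Fin.sum_filter_not_val_lt_le_of_antitone {M : Type*} [AddCommMonoid M] [PartialOrder M]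
    [IsOrderedAddMonoid M] {n m : ℕ} {f : Fin n → M} (hf : Antitone f) (j : Fin n)
    (hj : j.val < m) :
    ∑ i : Fin n with ¬ i.val < m, f i ≤ (n - m) • f j :=
  calc ∑ i : Fin n with ¬ i.val < m, f i
      ≤ ∑ i : Fin n with ¬ i.val < m, f j :=
        sum_le_sum fun i hi => hf <| Fin.le_def.2 <| by
          rw [mem_filter] at hi
          omega
    _ = (n - m) • f j := by rw [Finset.sum_const, Fin.card_filter_not_val_lt]

/-- Forgoing liveness (`π_live = 0`), the minimum number of platforms required to
tolerate `πs` compromised platforms while tolerating `c` crashes is `πs + 1`: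
(1) for any valid configuration (descending platform sizes whose total `N` satisfies
`N ≥ 2c + f_safe + 1` with `f_safe` the sum of the `πs` largest sizes), we have
`ν · (P - πs) ≥ 2c + 1` (i.e. `P ≥ (2c+1)/ν + πs`), where `ν` is the size of the
`πs`-th largest platform, and hence `P ≥ πs + 1`;
(2) placing `2c + 1` nodes in each of `πs + 1` platforms is a valid configuration. -/
theorem min_platforms_safety_only (c πs : ℕ) (hπs : 1 ≤ πs) :
    (∀ (P : ℕ) (sizes : Fin P → ℕ),
      (∀ i j : Fin P, i ≤ j → sizes j ≤ sizes i) →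
      (∀ i, 1 ≤ sizes i) →
      ∀ hP : πs ≤ P,
      (∑ i, sizes i) ≥
          2 * c + (∑ i ∈ Finset.univ.filter (fun i : Fin P => (i : ℕ) < πs), sizes i) + 1 →
      sizes ⟨πs - 1, by omega⟩ * (P - πs) ≥ 2 * c + 1 ∧ P ≥ πs + 1)
    ∧ (πs + 1) * (2 * c + 1) ≥ 2 * c + πs * (2 * c + 1) + 1 := by
  refine ⟨fun P sizes hanti _ hP htotal => ?_, le_of_eq (by ring)⟩
  have htail : 2 * c + 1 ≤ ∑ i : Fin P with ¬ i.val < πs, sizes i := by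
    have := sum_filter_add_sum_filter_not univ (fun i : Fin P => i.val < πs) sizes
    omega
  have hν : sizes ⟨πs - 1, by omega⟩ * (P - πs) ≥ 2 * c + 1 := by
    rw [mul_comm, ← smul_eq_mul]
    exact htail.trans <|
      Fin.sum_filter_not_val_lt_le_of_antitone hanti ⟨πs - 1, by omega⟩
        (Nat.sub_lt hπs Nat.one_pos)
  exact ⟨hν, Nat.lt_of_sub_ne_zero fun hzero => by simp [hzero] at hν⟩
end
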